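/- Let K be a field of characteristic 0, let P ∈ K[x,y] be nonzero, and let P̃ ∈ K[x,y] denote the polynomial y^{ddeg(P)}·P(x/y, y). Let P⋆ be a squarefree part of P and let (P̃)⋆ be a squarefree part of P̃. Then (P̃)⋆ equals, up to a nonzero constant factor, the polynomial y^{ddeg(P⋆)}·P⋆(x/y, y), and consequently bideg((P̃)⋆) ≤ (deg_x P⋆, ddeg(P⋆) + deg_y P⋆). -/

import Mathlib

open Polynomial

/-- The diagonal degree `ddeg P = max { i - j : a_{i,j} ≠ 0 }`. -/
noncomputable def ddeg {K : Type*} [Field K] (P : Polynomial (Polynomial K)) : ℤ :=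
  WithBot.unbotD 0 ((P.support.biUnion fun j =>
    (P.coeff j).support.image fun i : ℕ => (i : ℤ) - (j : ℤ))).max

/-- `deg_x` of a bivariate polynomial in `K[x][y]` (inner variable `x`). -/
noncomputable def degX {K : Type*} [Field K] (P : Polynomial (Polynomial K)) : ℕ :=
  P.support.sup fun j => (P.coeff j).natDegree

/-- `Qs` is a squarefree part of `Q`. -/
def IsSquarefreePart {R : Type*} [CommRing R] (Q Qs : R) : Prop :=
  ∃ (m : ℕ) (f : Fin m → R),
    (∀ i, Squarefree (f i)) ∧
    (∀ i j, i ≠ j → IsRelPrime (f i) (f j)) ∧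
    Q = ∏ i, f i ^ ((i : ℕ) + 1) ∧
    Qs = ∏ i, f i

/-- The field `K(x,y)` of rational functions, as the fraction field of `K[x][y]`. -/
abbrev Fq (K : Type*) [Field K] : Type _ := FractionRing (Polynomial (Polynomial K))

/-- The element `x` of `K(x,y)`. -/
noncomputable def xF (K : Type*) [Field K] : Fq K :=
  algebraMap (Polynomial (Polynomial K)) (Fq K) (C X)

/-- The element `y` of `K(x,y)`. -/
noncomputable def yF (K : Type*) [Field K] : Fq K :=
  algebraMap (Polynomial (Polynomial K)) (Fq K) X

/-- Evaluation `P(x/y, y) ∈ K(x,y)` of a bivariate polynomial `P ∈ K[x][y]`. -/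
noncomputable def substXY {K : Type*} [Field K] (P : Polynomial (Polynomial K)) : Fq K :=
  Polynomial.eval₂
    (Polynomial.eval₂RingHom
      ((algebraMap (Polynomial (Polynomial K)) (Fq K)).comp
        ((C : Polynomial K →+* Polynomial (Polynomial K)).comp
          (C : K →+* Polynomial K)))
      (xF K / yF K))
    (yF K) P

/-!
The substitution `x ↦ x / y` is undone by `x ↦ x y`, and `P ↦ P̃` removes exactly the power of `y`
this introduces. Consequently `P ↦ P̃` is multiplicative (`P̃` is the unique polynomial prime to `y`
agreeing with `P(x / y, y)` up to a power of `y`) and preserves squarefreeness. Writing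
`P = ∏ fᵢ ^ (i + 1)` and `P⋆ = ∏ fᵢ`, the squarefree polynomials `(P⋆)~` and `(P̃)⋆` both
divide `P̃ = ∏ f̃ᵢ ^ (i + 1)` and each divides a power of the other, so they are associates, i.e.
differ by a nonzero constant. The degree bounds are read off the monomials
`xⁱ yʲ ↦ xⁱ y^(j - i + ddeg P)`.
-/

theorem Polynomial.eq_of_X_pow_mul_eq {R : Type*} [CommRing R] [IsDomain R] {u w : R[X]} {m n : ℕ}
    (hu : ¬ X ∣ u) (hw : ¬ X ∣ w) (h : X ^ m * u = X ^ n * w) : u = w := by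
  wlog hmn : m ≤ n generalizing m n u w
  · exact (this hw hu h.symm (le_of_not_ge hmn)).symm
  obtain ⟨k, rfl⟩ := Nat.exists_eq_add_of_le hmn
  rw [pow_add, mul_assoc, mul_right_inj' (pow_ne_zero _ X_ne_zero)] at h
  rcases k with _ | k
  · simpa using h
  · exact absurd (h ▸ dvd_mul_of_dvd_left (dvd_pow_self X k.succ_ne_zero) w) hu

namespace DiagonalSubst

variable {K : Type*} [Field K]

local notation "ι" => algebraMap K[X][X] (Fq K)

theorem algebraMap_injective : Function.Injective ι := IsFractionRing.injective _ _

@[simp] theorem algebraMap_X : ι X = yF K := rfl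

theorem yF_ne_zero : yF K ≠ 0 :=
  (map_ne_zero_iff _ algebraMap_injective).mpr X_ne_zero

variable (K) in
noncomputable def substXYHom : K[X][X] →+* Fq K :=
  eval₂RingHom (eval₂RingHom ((ι).comp (C.comp C)) (xF K / yF K)) (yF K)

theorem substXY_eq_substXYHom (P : K[X][X]) : substXY P = substXYHom K P := rfl

@[simp] theorem substXYHom_X : substXYHom K X = yF K := by simp [substXYHom]
@[simp] theorem substXYHom_C_X : substXYHom K (C X) = xF K / yF K := by simp [substXYHom]
@[simp] theorem substXYHom_C_C (c : K) : substXYHom K (C (C c)) = ι (C (C c)) := by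
  simp [substXYHom]

variable (K) in
/-- The substitution `x ↦ x y`, inverse to `x ↦ x / y`. -/
noncomputable def scaleX : K[X][X] →+* K[X][X] :=
  eval₂RingHom (eval₂RingHom (C.comp C) (C X * X)) X

@[simp] theorem scaleX_X : scaleX K X = X := by simp [scaleX]
@[simp] theorem scaleX_C_X : scaleX K (C X) = C X * X := by simp [scaleX]
@[simp] theorem scaleX_C_C (c : K) : scaleX K (C (C c)) = C (C c) := by simp [scaleX]

theorem substXYHom_comp_scaleX : (substXYHom K).comp (scaleX K) = ι := by
  refine ringHom_ext' (ringHom_ext (fun c => ?_) ?_) ?_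
  · simp
  · simp [div_mul_cancel₀ _ (yF_ne_zero (K := K)), xF]
  · simp

theorem scaleX_injective : Function.Injective (scaleX K) := by
  intro p q h
  apply algebraMap_injective
  rw [← substXYHom_comp_scaleX]
  simp [h]

theorem substXYHom_injective : Function.Injective (substXYHom K) := by
  let Φ : Fq K →+* Fq K := IsFractionRing.lift (g := (ι).comp (scaleX K))
    (fun _ _ h => scaleX_injective (algebraMap_injective h))
  have hΦ (p : K[X][X]) : Φ (ι p) = ι (scaleX K p) := IsFractionRing.lift_algebraMap _ _
  have hy : Φ (yF K) = yF K := by simpa using hΦ X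
  have hΦsubst : Φ.comp (substXYHom K) = ι := by
    refine ringHom_ext' (ringHom_ext (fun c => ?_) ?_) ?_
    · simp [hΦ]
    · simp [map_div₀, xF, hΦ, hy, yF_ne_zero]
    · simp [hy]
  intro p q h
  apply algebraMap_injective
  rw [← hΦsubst]
  simp [h]

theorem sub_le_ddeg {P : K[X][X]} {i j : ℕ} (h : (P.coeff j).coeff i ≠ 0) :
    (i : ℤ) - j ≤ ddeg P := by
  have hmem : (i : ℤ) - j ∈ P.support.biUnion fun j =>
      (P.coeff j).support.image fun i : ℕ => (i : ℤ) - (j : ℤ) := by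
    simp only [Finset.mem_biUnion, Finset.mem_image, mem_support_iff]
    exact ⟨j, fun h0 => h (by simp [h0]), i, h, rfl⟩
  obtain ⟨m, hm⟩ := Finset.max_of_mem hmem
  rw [ddeg, hm]
  exact Finset.le_max_of_eq hmem hm

theorem exists_coeff_ne_zero_sub_eq_ddeg {P : K[X][X]} (hP : P ≠ 0) :
    ∃ i j : ℕ, (P.coeff j).coeff i ≠ 0 ∧ (i : ℤ) - j = ddeg P := by
  obtain ⟨j, hj⟩ := support_nonempty.mpr hP
  obtain ⟨i, hi⟩ := support_nonempty.mpr (mem_support_iff.mp hj)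
  have hS : (P.support.biUnion fun j =>
      (P.coeff j).support.image fun i : ℕ => (i : ℤ) - (j : ℤ)).Nonempty :=
    ⟨_, Finset.mem_biUnion.mpr ⟨j, hj, Finset.mem_image_of_mem _ hi⟩⟩
  obtain ⟨m, hm⟩ := Finset.max_of_nonempty hS
  have hmem := Finset.mem_of_max hm
  simp only [Finset.mem_biUnion, Finset.mem_image] at hmem
  obtain ⟨j, -, i, hi, rfl⟩ := hmem
  exact ⟨i, j, mem_support_iff.mp hi, by rw [ddeg, hm]; rfl⟩

theorem natDegree_coeff_le_degX (Q : K[X][X]) (k : ℕ) : (Q.coeff k).natDegree ≤ degX Q := by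
  by_cases hk : k ∈ Q.support
  · exact Finset.le_sup (f := fun j => (Q.coeff j).natDegree) hk
  · simp [notMem_support_iff.mp hk]

theorem degX_le_iff {Q : K[X][X]} {n : ℕ} : degX Q ≤ n ↔ ∀ k, (Q.coeff k).natDegree ≤ n :=
  ⟨fun h k => (natDegree_coeff_le_degX Q k).trans h, fun h => Finset.sup_le fun k _ => h k⟩

theorem degX_mul_C_C_le (Q : K[X][X]) (c : K) : degX (Q * C (C c)) ≤ degX Q :=
  degX_le_iff.mpr fun k => by
    rw [coeff_mul_C]
    exact (natDegree_mul_C_le _ _).trans (natDegree_coeff_le_degX Q k)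

/-- `P̃ = y ^ ddeg P * P(x / y, y)`, built monomial by monomial: `x^i y^j ↦ x^i y^(j - i + ddeg P)`,
where the exponent is nonnegative by the definition of `ddeg`. -/
noncomputable def tilde (P : K[X][X]) : K[X][X] :=
  ∑ j ∈ P.support, ∑ i ∈ (P.coeff j).support,
    monomial ((j : ℤ) - i + ddeg P).toNat (monomial i ((P.coeff j).coeff i))

@[simp] theorem tilde_zero : tilde (0 : K[X][X]) = 0 := by simp [tilde]

theorem algebraMap_monomial_monomial (k i : ℕ) (a : K) :
    ι (monomial k (monomial i a)) = ι (C (C a)) * xF K ^ i * yF K ^ k := by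
  simp [← C_mul_X_pow_eq_monomial, xF]

theorem substXYHom_monomial_monomial (j i : ℕ) (a : K) :
    substXYHom K (monomial j (monomial i a)) = ι (C (C a)) * (xF K / yF K) ^ i * yF K ^ j := by
  simp [← C_mul_X_pow_eq_monomial]

theorem substXYHom_eq_sum (P : K[X][X]) : substXYHom K P = ∑ j ∈ P.support,
    ∑ i ∈ (P.coeff j).support, substXYHom K (monomial j (monomial i ((P.coeff j).coeff i))) := by
  conv_lhs => rw [P.as_sum_support]
  refine (map_sum _ _ _).trans (Finset.sum_congr rfl fun j _ => ?_)
  conv_lhs => rw [(P.coeff j).as_sum_support]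
  rw [map_sum, map_sum]

theorem algebraMap_tilde (P : K[X][X]) : ι (tilde P) = yF K ^ ddeg P * substXYHom K P := by
  have hy := yF_ne_zero (K := K)
  rw [substXYHom_eq_sum]
  simp only [tilde, map_sum, Finset.mul_sum]
  refine Finset.sum_congr rfl fun j _ => Finset.sum_congr rfl fun i hi => ?_
  have he : 0 ≤ (j : ℤ) - i + ddeg P := by have := sub_le_ddeg (mem_support_iff.mp hi); omega
  rw [algebraMap_monomial_monomial, substXYHom_monomial_monomial,
    ← zpow_natCast (yF K), Int.toNat_of_nonneg he, zpow_add₀ hy, zpow_sub₀ hy, zpow_natCast,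
    zpow_natCast, div_pow]
  ring

theorem coeff_coeff_tilde (P : K[X][X]) (k i : ℕ) : ((tilde P).coeff k).coeff i =
    ∑ j ∈ P.support, if ((j : ℤ) - i + ddeg P).toNat = k then (P.coeff j).coeff i else 0 := by
  simp only [tilde, finsetSum_coeff, coeff_monomial]
  refine Finset.sum_congr rfl fun j _ => ?_
  rw [Finset.sum_eq_single i]
  · split_ifs <;> simp_all
  · intro b _ hb
    split_ifs <;> simp [coeff_monomial, hb]
  · intro hi
    split_ifs <;> simp_all

theorem not_X_dvd_tilde {P : K[X][X]} (hP : P ≠ 0) : ¬ X ∣ tilde P := by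
  obtain ⟨i₀, j₀, h₀, hd⟩ := exists_coeff_ne_zero_sub_eq_ddeg hP
  have hcoeff : ((tilde P).coeff 0).coeff i₀ = (P.coeff j₀).coeff i₀ := by
    rw [coeff_coeff_tilde, Finset.sum_eq_single j₀]
    · rw [if_pos (by omega)]
    · intro j _ hj
      split_ifs
      · by_contra ha
        have := sub_le_ddeg ha
        omega
      · rfl
    · intro hj
      rw [notMem_support_iff.mp hj, coeff_zero, ite_self]
  rw [X_dvd_iff]
  intro hX
  rw [hX, coeff_zero] at hcoeff
  exact h₀ hcoeff.symm

theorem natDegree_coeff_tilde_le (P : K[X][X]) (k : ℕ) :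
    ((tilde P).coeff k).natDegree ≤ degX P := by
  simp only [tilde, finsetSum_coeff, coeff_monomial]
  refine natDegree_sum_le_of_forall_le _ _ fun j _ =>
    natDegree_sum_le_of_forall_le _ _ fun i hi => ?_
  split_ifs
  · exact (natDegree_monomial_le _).trans
      ((le_natDegree_of_ne_zero (mem_support_iff.mp hi)).trans (natDegree_coeff_le_degX P j))
  · simp

theorem degX_tilde_le (P : K[X][X]) : degX (tilde P) ≤ degX P :=
  degX_le_iff.mpr (natDegree_coeff_tilde_le P)

theorem natDegree_tilde_le {P : K[X][X]} (hP : P ≠ 0) :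
    ((tilde P).natDegree : ℤ) ≤ ddeg P + P.natDegree := by
  obtain ⟨i₀, j₀, h₀, hd⟩ := exists_coeff_ne_zero_sub_eq_ddeg hP
  have hj₀ : j₀ ≤ P.natDegree := le_natDegree_of_ne_zero fun h => h₀ (by simp [h])
  suffices (tilde P).natDegree ≤ (ddeg P + P.natDegree).toNat by omega
  refine natDegree_sum_le_of_forall_le _ _ fun j hj => natDegree_sum_le_of_forall_le _ _ fun i _ =>
    (natDegree_monomial_le _).trans ?_
  have := le_natDegree_of_ne_zero (mem_support_iff.mp hj)
  omega

theorem eq_of_zpow_mul_algebraMap_eq {u w : K[X][X]} (hu : ¬ X ∣ u) (hw : ¬ X ∣ w) {a b : ℤ}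
    (h : yF K ^ a * ι u = yF K ^ b * ι w) : u = w := by
  have hy := yF_ne_zero (K := K)
  refine eq_of_X_pow_mul_eq (m := (a - b).toNat) (n := (b - a).toNat) hu hw
    (algebraMap_injective ?_)
  have hab : ((a - b).toNat : ℤ) = (b - a).toNat + a - b := by omega
  simp only [map_mul, map_pow, algebraMap_X]
  rw [← zpow_natCast (yF K) (a - b).toNat, hab, zpow_sub₀ hy, zpow_add₀ hy, zpow_natCast,
    div_mul_eq_mul_div, div_eq_iff (zpow_ne_zero _ hy), mul_assoc, h]
  ring

theorem tilde_mul (P Q : K[X][X]) : tilde (P * Q) = tilde P * tilde Q := by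
  rcases eq_or_ne P 0 with rfl | hP
  · simp
  rcases eq_or_ne Q 0 with rfl | hQ
  · simp
  refine eq_of_zpow_mul_algebraMap_eq (a := ddeg P + ddeg Q) (b := ddeg (P * Q))
    (not_X_dvd_tilde (mul_ne_zero hP hQ))
    (prime_X.not_dvd_mul (not_X_dvd_tilde hP) (not_X_dvd_tilde hQ)) ?_
  rw [map_mul, algebraMap_tilde, algebraMap_tilde, algebraMap_tilde, map_mul,
    zpow_add₀ yF_ne_zero]
  ring

theorem tilde_one : tilde (1 : K[X][X]) = 1 :=
  eq_of_zpow_mul_algebraMap_eq (a := 0) (b := ddeg 1) (not_X_dvd_tilde one_ne_zero)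
    (fun h => not_isUnit_X (isUnit_of_dvd_one h))
    (by rw [algebraMap_tilde, map_one, map_one, zpow_zero, one_mul])

variable (K) in
noncomputable def tildeHom : K[X][X] →*₀ K[X][X] where
  toFun := tilde
  map_zero' := tilde_zero
  map_one' := tilde_one
  map_mul' := tilde_mul

theorem tilde_pow (P : K[X][X]) (n : ℕ) : tilde (P ^ n) = tilde P ^ n := map_pow (tildeHom K) P n

theorem tilde_dvd_tilde {P Q : K[X][X]} (h : P ∣ Q) : tilde P ∣ tilde Q :=
  _root_.map_dvd (tildeHom K) h

theorem X_pow_mul_scaleX_tilde (P : K[X][X]) :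
    X ^ (-ddeg P).toNat * scaleX K (tilde P) = X ^ (ddeg P).toNat * P := by
  apply substXYHom_injective
  rw [map_mul, map_mul, ← RingHom.comp_apply, substXYHom_comp_scaleX, algebraMap_tilde,
    map_pow, map_pow, substXYHom_X, ← zpow_natCast, ← zpow_natCast, ← mul_assoc,
    ← zpow_add₀ yF_ne_zero]
  congr 2
  omega

theorem isUnit_iff_eq_C_C {p : K[X][X]} : IsUnit p ↔ ∃ c : K, c ≠ 0 ∧ p = C (C c) := by
  simp [Polynomial.isUnit_iff, eq_comm]

/-- Write `scaleX h = X ^ n * h'` with `X ∤ h'`: then `h' * h'` divides `X ^ _ * P`, hence `P`, so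
`h'` is a constant and `h = X ^ n * h'`; as `h ∣ P̃` and `X ∤ P̃`, `n = 0`. -/
theorem squarefree_tilde {P : K[X][X]} (hP : Squarefree P) : Squarefree (tilde P) := by
  intro h hh
  have hxh : ¬ X ∣ h := fun hX =>
    not_X_dvd_tilde hP.ne_zero (hX.trans ((dvd_mul_right h h).trans hh))
  have hh0 : h ≠ 0 := by
    rintro rfl
    exact hxh (dvd_zero X)
  obtain ⟨n, h', hxh', hsc⟩ := WfDvdMonoid.max_power_factor
    ((map_ne_zero_iff _ scaleX_injective).mpr hh0) irreducible_X
  have hh'P : h' * h' ∣ P := by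
    have hcop : IsRelPrime (h' * h') (X ^ (ddeg P).toNat) :=
      have hX := (irreducible_X.isRelPrime_iff_not_dvd.mpr hxh').symm
      (hX.mul_left hX).pow_right
    refine hcop.dvd_of_dvd_mul_left ?_
    rw [← X_pow_mul_scaleX_tilde]
    refine Dvd.dvd.mul_left ((mul_dvd_mul ?_ ?_).trans
      (map_mul (scaleX K) h h ▸ _root_.map_dvd _ hh)) _
    all_goals exact hsc ▸ dvd_mul_left h' _
  obtain ⟨c, hc, rfl⟩ := isUnit_iff_eq_C_C.mp (hP h' hh'P)
  have hh_eq : h = X ^ n * C (C c) := scaleX_injective (by simp [hsc])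
  rcases n with _ | n
  · exact isUnit_iff_eq_C_C.mpr ⟨c, hc, by simpa using hh_eq⟩
  · exact absurd (hh_eq ▸ dvd_mul_of_dvd_left (dvd_pow_self _ n.succ_ne_zero) _) hxh

theorem exists_eq_mul_C_C_of_associated {p q : K[X][X]} (h : Associated p q) :
    ∃ c : K, c ≠ 0 ∧ q = p * C (C c) := by
  obtain ⟨u, rfl⟩ := h
  obtain ⟨c, hc, hu⟩ := isUnit_iff_eq_C_C.mp u.isUnit
  exact ⟨c, hc, by rw [hu]⟩

end DiagonalSubst

namespace IsSquarefreePart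

variable {R : Type*} [CommRing R] {Q Qs : R}

theorem squarefree [IsDomain R] [DecompositionMonoid R] (h : IsSquarefreePart Q Qs) :
    Squarefree Qs := by
  obtain ⟨m, f, hsf, hrp, -, rfl⟩ := h
  exact Finset.squarefree_prod_of_pairwise_isCoprime (fun i _ j _ hij => hrp i j hij)
    fun i _ => hsf i

theorem dvd (h : IsSquarefreePart Q Qs) : Qs ∣ Q := by
  obtain ⟨m, f, -, -, rfl, rfl⟩ := h
  exact Finset.prod_dvd_prod_of_dvd _ _ fun i _ => dvd_pow_self _ (Nat.succ_ne_zero _)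

theorem exists_dvd_pow (h : IsSquarefreePart Q Qs) : ∃ n, Q ∣ Qs ^ n := by
  obtain ⟨m, f, -, -, rfl, rfl⟩ := h
  refine ⟨m, ?_⟩
  rw [← Finset.prod_pow]
  exact Finset.prod_dvd_prod_of_dvd _ _ fun i _ => pow_dvd_pow _ i.isLt

theorem associated [IsDomain R] [DecompositionMonoid R] (h : IsSquarefreePart Q Qs) {S : R}
    (hS : Squarefree S) (hSQ : S ∣ Q) {n : ℕ} (hQS : Q ∣ S ^ n) : Associated Qs S := by
  obtain ⟨k, hQk⟩ := h.exists_dvd_pow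
  refine associated_of_dvd_dvd ?_ ?_
  · exact (h.squarefree.dvd_pow_iff_dvd n.succ_ne_zero).mp
      (h.dvd.trans (hQS.trans (pow_dvd_pow S n.le_succ)))
  · exact (hS.dvd_pow_iff_dvd k.succ_ne_zero).mp
      (hSQ.trans (hQk.trans (pow_dvd_pow Qs k.le_succ)))

end IsSquarefreePart

open DiagonalSubst in
theorem squarefree_part_tilde (K : Type*) [Field K]
    (P Pt Ps Pts : Polynomial (Polynomial K))
    (hPt : algebraMap (Polynomial (Polynomial K)) (Fq K) Pt =
      yF K ^ (ddeg P) * substXY P)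
    (hPs : IsSquarefreePart P Ps)
    (hPts : IsSquarefreePart Pt Pts) :
    (∃ c : K, c ≠ 0 ∧
      algebraMap (Polynomial (Polynomial K)) (Fq K) Pts =
        algebraMap (Polynomial (Polynomial K)) (Fq K) (C (C c)) *
          (yF K ^ (ddeg Ps) * substXY Ps)) ∧
    degX Pts ≤ degX Ps ∧
    (Pts.natDegree : ℤ) ≤ ddeg Ps + Ps.natDegree := by
  have hPt_eq : Pt = tilde P := algebraMap_injective (by rw [hPt, algebraMap_tilde]; rfl)
  obtain ⟨n, hPn⟩ := hPs.exists_dvd_pow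
  have hassoc : Associated Pts (tilde Ps) := by
    refine hPts.associated (squarefree_tilde hPs.squarefree) (n := n) ?_ ?_
    · exact hPt_eq ▸ tilde_dvd_tilde hPs.dvd
    · exact hPt_eq ▸ tilde_pow Ps n ▸ tilde_dvd_tilde hPn
  obtain ⟨c, hc, rfl⟩ := exists_eq_mul_C_C_of_associated hassoc.symm
  refine ⟨⟨c, hc, ?_⟩, (degX_mul_C_C_le _ c).trans (degX_tilde_le Ps), ?_⟩
  · rw [map_mul, algebraMap_tilde, substXY_eq_substXYHom, mul_comm]
  · have := natDegree_tilde_le hPs.squarefree.ne_zero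
    have := natDegree_mul_C_le (tilde Ps) (C c)
    omega
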